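/- arXiv:1408.4409 — 2 statements merged into one kernel-verified Lean document; each statement's English description precedes it below -/
import Mathlib

section
/- Let 0 ≤ M ≤ N, let 0 < α ≤ 1, and let Y ⊆ ℝ^N be a subspace with dim Y = N − M. Then the union of all subspaces X ⊆ ℝ^N with dim X = N − M and ‖P_X − P_Y‖ < α equals {x ∈ ℝ^N : x ≠ 0 and ‖P_{Y⊥}x‖₂ < α‖x‖₂} ∪ {0}. -/
/-!
The inclusion `⊆` is the estimate `‖P_{Y⊥} x‖ = ‖(P_X - P_Y) x‖ ≤ ‖P_X - P_Y‖ ‖x‖` for `x ∈ X`.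

For `⊇`, let `y = P_Y x`, which is nonzero since `‖P_{Y⊥} x‖ < α ‖x‖ ≤ ‖x‖`, and `Z = Y ⊓ y⊥`.
Tilting `Y = Z ⊕ ℝy` to `X = Z ⊕ ℝx` keeps the dimension, and `P_X - P_Y = P_{ℝx} - P_{ℝy}`.
Nonnegativity of the Gram determinant of `x, y, z` bounds `‖(P_{ℝx} - P_{ℝy}) z‖` by the sine
`‖x - y‖ / ‖x‖ = ‖P_{Y⊥} x‖ / ‖x‖ < α` of the angle between `x` and `y`, times `‖z‖`.
-/

noncomputable def gapMetric {N : ℕ} (X Y : Submodule ℝ (EuclideanSpace ℝ (Fin N))) : ℝ :=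
  ‖X.subtypeL.comp X.orthogonalProjectionOnto - Y.subtypeL.comp Y.orthogonalProjectionOnto‖

open Submodule RealInnerProductSpace

variable {E : Type*} [NormedAddCommGroup E] [InnerProductSpace ℝ E]

-- The Gram determinant of `a, b, z`, expanded.
theorem gram_det_three_nonneg (a b z : E) :
    ‖b‖ ^ 2 * ⟪a, z⟫ ^ 2 + ‖a‖ ^ 2 * ⟪b, z⟫ ^ 2 - 2 * ⟪a, b⟫ * ⟪a, z⟫ * ⟪b, z⟫ ≤
      (‖a‖ ^ 2 * ‖b‖ ^ 2 - ⟪a, b⟫ ^ 2) * ‖z‖ ^ 2 := by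
  have h := (Matrix.posSemidef_gram ℝ ![a, b, z]).det_nonneg
  simp only [Matrix.det_fin_three, Matrix.gram, Matrix.of_apply, Matrix.cons_val,
    real_inner_self_eq_norm_sq, real_inner_comm a b, real_inner_comm a z, real_inner_comm b z] at h
  linarith

theorem Submodule.IsOrtho.starProjection_sup {U V : Submodule ℝ E} [U.HasOrthogonalProjection]
    [V.HasOrthogonalProjection] [(U ⊔ V).HasOrthogonalProjection] (h : U ⟂ V) :
    (U ⊔ V).starProjection = U.starProjection + V.starProjection := by
  ext z
  refine eq_starProjection_of_mem_orthogonal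
    (add_mem_sup (U.starProjection_apply_mem z) (V.starProjection_apply_mem z)) ?_
  rw [← inf_orthogonal, _root_.add_apply, sub_add_eq_sub_sub]
  constructor
  · exact sub_mem (U.sub_starProjection_mem_orthogonal z) (h.ge (V.starProjection_apply_mem z))
  · rw [sub_right_comm]
    exact sub_mem (V.sub_starProjection_mem_orthogonal z) (h.le (U.starProjection_apply_mem z))

theorem norm_starProjection_span_sub_le {a b : E} (hb : b ≠ 0) (hab : ⟪a - b, b⟫ = 0) :
    ‖(ℝ ∙ a).starProjection - (ℝ ∙ b).starProjection‖ ≤ ‖a - b‖ / ‖a‖ := by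
  have hinner : ⟪a, b⟫ = ‖b‖ ^ 2 := by
    rwa [inner_sub_left, real_inner_self_eq_norm_sq, sub_eq_zero] at hab
  have hpyth : ‖a‖ ^ 2 = ‖b‖ ^ 2 + ‖a - b‖ ^ 2 := by
    rw [← sub_add_cancel a b, norm_add_sq_real, add_sub_cancel_right, hab]
    ring
  have hb' : 0 < ‖b‖ := norm_pos_iff.2 hb
  have ha : 0 < ‖a‖ := by nlinarith [sq_nonneg ‖a - b‖, norm_nonneg a]
  refine ContinuousLinearMap.opNorm_le_bound _ (by positivity) fun z => ?_
  refine le_of_pow_le_pow_left₀ two_ne_zero (by positivity) ?_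
  have hgram := gram_det_three_nonneg a b z
  rw [_root_.sub_apply, starProjection_singleton, starProjection_singleton,
    norm_sub_sq_real, norm_smul, norm_smul, real_inner_smul_left, real_inner_smul_right,
    hinner, Real.norm_eq_abs, Real.norm_eq_abs, mul_pow, mul_pow, sq_abs, sq_abs]
  rw [hinner, hpyth] at hgram
  simp only [RCLike.ofReal_real_eq_id, id, div_pow, hpyth]
  field_simp
  rw [hpyth]
  linarith [mul_le_mul_of_nonneg_left hgram (by positivity : (0 : ℝ) ≤ ‖b‖ ^ 2 + ‖a - b‖ ^ 2)]

theorem norm_starProjection_orthogonal_le_of_mem {X Y : Submodule ℝ E}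
    [X.HasOrthogonalProjection] [Y.HasOrthogonalProjection] {x : E} (hx : x ∈ X) :
    ‖Yᗮ.starProjection x‖ ≤ ‖X.starProjection - Y.starProjection‖ * ‖x‖ := by
  have hdiff : Yᗮ.starProjection x = (X.starProjection - Y.starProjection) x := by
    rw [_root_.sub_apply, starProjection_eq_self_iff.2 hx, starProjection_orthogonal_val]
  exact hdiff ▸ (X.starProjection - Y.starProjection).le_opNorm x

theorem exists_finrank_eq_norm_starProjection_sub_le [FiniteDimensional ℝ E] (Y : Submodule ℝ E)
    {x : E} (hx : Y.starProjection x ≠ 0) :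
    ∃ X : Submodule ℝ E, x ∈ X ∧ Module.finrank ℝ X = Module.finrank ℝ Y ∧
      ‖X.starProjection - Y.starProjection‖ ≤ ‖Yᗮ.starProjection x‖ / ‖x‖ := by
  set y := Y.starProjection x
  set Z := (ℝ ∙ y)ᗮ ⊓ Y
  have hxy : ⟪x - y, y⟫ = 0 := Y.starProjection_inner_eq_zero x y (Y.starProjection_apply_mem x)
  have hyZ : y ∈ Zᗮ := fun z hz => mem_orthogonal_singleton_iff_inner_left.1 hz.1
  have hxZ : x ∈ Zᗮ := by
    have : x - y ∈ Zᗮ := orthogonal_le inf_le_right (Y.sub_starProjection_mem_orthogonal x)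
    simpa using add_mem this hyZ
  have hnotin {v : E} (hv : ⟪y, v⟫ ≠ 0) : v ∉ Z := fun h => hv (h.1 _ (mem_span_singleton_self y))
  have hY : Z ⊔ (ℝ ∙ y) = Y := by
    rw [sup_comm]
    exact sup_orthogonal_inf_of_hasOrthogonalProjection
      ((span_singleton_le_iff_mem _ _).2 (Y.starProjection_apply_mem x))
  refine ⟨Z ⊔ (ℝ ∙ x), mem_sup_right (mem_span_singleton_self x), ?_, ?_⟩
  · have hyx : ⟪y, x⟫ = ⟪y, y⟫ := by
      rw [real_inner_comm]; rwa [inner_sub_left, sub_eq_zero] at hxy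
    have hyy : ⟪y, y⟫ ≠ 0 := inner_self_ne_zero.2 hx
    rw [← hY, finrank_sup_span_singleton (hnotin (hyx ▸ hyy)),
      finrank_sup_span_singleton (hnotin hyy)]
  · have hortho {v : E} (hv : v ∈ Zᗮ) : Z ⟂ (ℝ ∙ v) :=
      (isOrtho_iff_le.2 ((span_singleton_le_iff_mem _ _).2 hv)).symm
    have hYproj : Y.starProjection = Z.starProjection + (ℝ ∙ y).starProjection := by
      rw [← (hortho hyZ).starProjection_sup]
      congr!
      exact hY.symm
    calc ‖(Z ⊔ ℝ ∙ x).starProjection - Y.starProjection‖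
        = ‖(ℝ ∙ x).starProjection - (ℝ ∙ y).starProjection‖ := by
          rw [hYproj, (hortho hxZ).starProjection_sup, add_sub_add_left_eq_sub]
      _ ≤ ‖x - y‖ / ‖x‖ := norm_starProjection_span_sub_le hx hxy
      _ = ‖Yᗮ.starProjection x‖ / ‖x‖ := by rw [starProjection_orthogonal_val]

theorem gapMetric_eq_norm_starProjection_sub {N : ℕ}
    (X Y : Submodule ℝ (EuclideanSpace ℝ (Fin N))) :
    gapMetric X Y = ‖X.starProjection - Y.starProjection‖ := rfl

theorem stmt11_general {N M : ℕ} (α : ℝ) (hα0 : 0 < α) (hα1 : α ≤ 1)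
    (Y : Submodule ℝ (EuclideanSpace ℝ (Fin N)))
    (hY : Module.finrank ℝ Y = N - M) :
    (⋃ X ∈ {X : Submodule ℝ (EuclideanSpace ℝ (Fin N)) |
        Module.finrank ℝ X = N - M ∧ gapMetric X Y < α},
      (X : Set (EuclideanSpace ℝ (Fin N))))
    = {x : EuclideanSpace ℝ (Fin N) | x ≠ 0 ∧
        ‖(Yᗮ.orthogonalProjectionOnto x : EuclideanSpace ℝ (Fin N))‖ < α * ‖x‖} ∪ {0} := by
  ext x
  simp only [Set.mem_iUnion, Set.mem_ofPred_eq, Set.mem_union, Set.mem_singleton_iff,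
    SetLike.mem_coe, exists_prop, ← starProjection_apply, gapMetric_eq_norm_starProjection_sub]
  constructor
  · rintro ⟨X, ⟨-, hXY⟩, hxX⟩
    by_cases hx0 : x = 0
    · exact .inr hx0
    · exact .inl ⟨hx0, (norm_starProjection_orthogonal_le_of_mem hxX).trans_lt
        (mul_lt_mul_of_pos_right hXY (norm_pos_iff.2 hx0))⟩
  · rintro (⟨hx0, hlt⟩ | rfl)
    · have hPx : Y.starProjection x ≠ 0 := by
        intro h
        rw [starProjection_orthogonal_val, h, sub_zero] at hlt
        nlinarith [norm_nonneg x]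
      obtain ⟨X, hxX, hdim, hXY⟩ := exists_finrank_eq_norm_starProjection_sub_le Y hPx
      exact ⟨X, ⟨hdim.trans hY, hXY.trans_lt ((div_lt_iff₀ (norm_pos_iff.2 hx0)).2 hlt)⟩, hxX⟩
    · exact ⟨Y, ⟨hY, by rwa [sub_self, norm_zero]⟩, Y.zero_mem⟩

/-- For a subspace `Y ⊆ ℝ^N` with `dim Y = N − M` and `0 < α ≤ 1`, the
union of all `(N−M)`-dimensional subspaces `X` with `d(X,Y) < α` equals
`{x ≠ 0 : ‖P_{Y⊥}x‖₂ < α‖x‖₂} ∪ {0}`. -/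
theorem stmt11 {N M : ℕ} (hMN : M ≤ N) (α : ℝ) (hα0 : 0 < α) (hα1 : α ≤ 1)
    (Y : Submodule ℝ (EuclideanSpace ℝ (Fin N)))
    (hY : Module.finrank ℝ Y = N - M) :
    (⋃ X ∈ {X : Submodule ℝ (EuclideanSpace ℝ (Fin N)) |
        Module.finrank ℝ X = N - M ∧ gapMetric X Y < α},
      (X : Set (EuclideanSpace ℝ (Fin N))))
    = {x : EuclideanSpace ℝ (Fin N) | x ≠ 0 ∧
        ‖(Yᗮ.orthogonalProjectionOnto x : EuclideanSpace ℝ (Fin N))‖ < α * ‖x‖} ∪ {0} :=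
  stmt11_general α hα0 hα1 Y hY
end

section
/- Let J ≥ 1 be an integer, let 0 ≤ δ < 1/3, and suppose Φ : ℝ^N → ℝ^M satisfies (1 − δ)‖x‖₂ ≤ ‖Φx‖₂ ≤ (1 + δ)‖x‖₂ for every J-sparse x ∈ ℝ^N. Then Φ satisfies the (3/√J, 1/3 − δ)-robust width property over B₁: for every x ∈ ℝ^N with ‖Φx‖₂ < (1/3 − δ)‖x‖₂, one has ‖x‖₂ ≤ (3/√J)‖x‖₁. -/
/-!
Split `x` into its restriction `x_T` to the `J` largest entries and the tail `y = x - x_T`.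
Every entry of `y` is at most `‖x_T‖₁ / J`, so `√J ‖y‖ ≤ ‖x‖₁ / 2`, and peeling off the `J`
largest entries again and again (an induction on the support) gives `√J ‖Φ y‖ ≤ (1 + δ) ‖x‖₁`.
The lower RIP bound on the sparse vector `x_T` then yields
`(1 - δ) √J ‖x‖ ≤ √J ‖Φ x‖ + 2 ‖x‖₁`, which contradicts `‖Φ x‖ < (1/3 - δ) ‖x‖`
unless `√J ‖x‖ ≤ 3 ‖x‖₁`.
-/

open Finset

theorem Finset.exists_subset_card_eq_nsmul_le_sum {α β : Type*} [DecidableEq α]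
    [AddCommMonoid β] [LinearOrder β] [IsOrderedAddMonoid β] (f : α → β) (s : Finset α) :
    ∀ k ≤ s.card, ∃ t ⊆ s, t.card = k ∧ ∀ j ∈ s \ t, k • f j ≤ ∑ i ∈ t, f i := by
  intro k
  induction k with
  | zero => exact fun _ => ⟨∅, by simp⟩
  | succ k ih =>
    intro hk
    obtain ⟨t, hts, htk, ht⟩ := ih (by omega)
    have hne : (s \ t).Nonempty := by
      rw [← card_pos, card_sdiff_of_subset hts]; omega
    obtain ⟨m, hm, hmax⟩ := (s \ t).exists_max_image f hne
    obtain ⟨hms, hmt⟩ := mem_sdiff.mp hm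
    refine ⟨insert m t, insert_subset hms hts, by rw [card_insert_of_notMem hmt, htk], ?_⟩
    intro j hj
    have hj' : j ∈ s \ t := by
      simp only [mem_sdiff, mem_insert, not_or] at hj ⊢; exact ⟨hj.1, hj.2.2⟩
    rw [succ_nsmul, sum_insert hmt, add_comm (f m)]
    exact add_le_add (ht j hj') (hmax j hj')

theorem Finset.exists_card_le_mul_le_sum {α : Type*} [Fintype α] [DecidableEq α]
    (f : α → ℝ) (J : ℕ) : ∃ t : Finset α, t.card ≤ J ∧ ∀ j ∉ t, J * f j ≤ ∑ i ∈ t, f i := by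
  rcases le_or_gt J (Fintype.card α) with hJ | hJ
  · obtain ⟨t, -, htJ, ht⟩ := exists_subset_card_eq_nsmul_le_sum f univ J (by simpa using hJ)
    exact ⟨t, htJ.le, fun j hj => by simpa [nsmul_eq_mul] using ht j (by simpa using hj)⟩
  · exact ⟨univ, by simpa using hJ.le, fun j hj => absurd (mem_univ j) hj⟩

theorem Finset.sum_le_of_card_le {α : Type*} {t : Finset α} {f : α → ℝ} {J : ℕ} {m : ℝ}
    (hJ : 0 < J) (ht : t.card ≤ J) (hm : 0 ≤ m) (hf : ∀ i ∈ t, J * f i ≤ m) :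
    ∑ i ∈ t, f i ≤ m := by
  have hJ' : (0 : ℝ) < J := by exact_mod_cast hJ
  have : J * ∑ i ∈ t, f i ≤ J * m := calc
    J * ∑ i ∈ t, f i = ∑ i ∈ t, J * f i := mul_sum _ _ _
    _ ≤ t.card • m := sum_le_card_nsmul _ _ _ hf
    _ ≤ J * m := by rw [nsmul_eq_mul]; gcongr
  exact le_of_mul_le_mul_left this hJ'

theorem Set.ncard_support_le_card {α M : Type*} [Zero M] {f : α → M} {s : Finset α}
    (hf : ∀ i ∉ s, f i = 0) : {i | f i ≠ 0}.ncard ≤ s.card := by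
  rw [← Set.ncard_coe_finset]
  exact Set.ncard_le_ncard (fun i hi => by by_contra h; exact hi (hf i h))

namespace EuclideanSpace

variable {ι : Type*}

section Indicator

variable [DecidableEq ι]

def indicator (s : Finset ι) (x : EuclideanSpace ℝ ι) : EuclideanSpace ℝ ι :=
  WithLp.toLp 2 fun i => if i ∈ s then x i else 0

@[simp]
theorem indicator_apply (s : Finset ι) (x : EuclideanSpace ℝ ι) (i : ι) :
    indicator s x i = if i ∈ s then x i else 0 := rfl

theorem sub_indicator_apply (s : Finset ι) (x : EuclideanSpace ℝ ι) (i : ι) :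
    (x - indicator s x) i = if i ∈ s then 0 else x i := by
  by_cases h : i ∈ s <;> simp [h]

theorem indicator_eq_self {s : Finset ι} {x : EuclideanSpace ℝ ι} (hx : ∀ i ∉ s, x i = 0) :
    indicator s x = x := by
  ext i
  by_cases h : i ∈ s <;> simp [h, hx]

end Indicator

variable [Fintype ι]

theorem two_mul_sqrt_mul_norm_le {t m : ℝ} (ht : 0 ≤ t) (hm : 0 ≤ m)
    (x : EuclideanSpace ℝ ι) (hx : ∀ i, t * |x i| ≤ m) :
    2 * (√t * ‖x‖) ≤ m + ∑ i, |x i| := by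
  have hL : 0 ≤ ∑ i, |x i| := sum_nonneg fun i _ => abs_nonneg _
  have hsq : (√t * ‖x‖) ^ 2 ≤ m * ∑ i, |x i| := calc
    (√t * ‖x‖) ^ 2 = ∑ i, t * |x i| * |x i| := by
      rw [mul_pow, Real.sq_sqrt ht, EuclideanSpace.norm_sq_eq, mul_sum]
      exact sum_congr rfl fun i _ => by rw [Real.norm_eq_abs]; ring
    _ ≤ ∑ i, m * |x i| := sum_le_sum fun i _ => mul_le_mul_of_nonneg_right (hx i) (abs_nonneg _)
    _ = m * ∑ i, |x i| := (mul_sum _ _ _).symm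
  nlinarith [sq_nonneg (m - ∑ i, |x i|), mul_nonneg (Real.sqrt_nonneg t) (norm_nonneg x)]

variable [DecidableEq ι]

theorem sum_abs_indicator (s : Finset ι) (x : EuclideanSpace ℝ ι) :
    ∑ i, |indicator s x i| = ∑ i ∈ s, |x i| := by
  simp [apply_ite, sum_ite_mem]

theorem sum_abs_add_sum_abs_sub_indicator (s : Finset ι) (x : EuclideanSpace ℝ ι) :
    ∑ i ∈ s, |x i| + ∑ i, |(x - indicator s x) i| = ∑ i, |x i| := by
  rw [← sum_abs_indicator, ← sum_add_distrib]
  refine sum_congr rfl fun i _ => ?_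
  by_cases h : i ∈ s <;> simp [h]

variable {F : Type*} [SeminormedAddCommGroup F] [Module ℝ F]

theorem sqrt_mul_norm_map_indicator_le {J : ℕ} (hJ : 0 < J) {C : ℝ} (hC : 0 ≤ C)
    (Φ : EuclideanSpace ℝ ι →ₗ[ℝ] F)
    (hΦ : ∀ x : EuclideanSpace ℝ ι, {i | x i ≠ 0}.ncard ≤ J → ‖Φ x‖ ≤ C * ‖x‖)
    {t : Finset ι} (ht : t.card ≤ J) {m : ℝ} (hm : 0 ≤ m) (x : EuclideanSpace ℝ ι)
    (hx : ∀ i ∈ t, J * |x i| ≤ m) :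
    √J * ‖Φ (indicator t x)‖ ≤ C * m := by
  have hsum : ∑ i ∈ t, |x i| ≤ m := sum_le_of_card_le hJ ht hm hx
  have hnorm : 2 * (√J * ‖indicator t x‖) ≤ m + ∑ i ∈ t, |x i| := by
    rw [← sum_abs_indicator]
    refine two_mul_sqrt_mul_norm_le (Nat.cast_nonneg J) hm _ fun i => ?_
    by_cases hi : i ∈ t <;> simp [hi, hx, hm]
  have hsparse : {i | indicator t x i ≠ 0}.ncard ≤ J :=
    (Set.ncard_support_le_card fun i hi => by simp [hi]).trans ht
  calc √J * ‖Φ (indicator t x)‖ ≤ C * (√J * ‖indicator t x‖) := by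
        rw [mul_left_comm]; exact mul_le_mul_of_nonneg_left (hΦ _ hsparse) (Real.sqrt_nonneg _)
    _ ≤ C * m := by gcongr; linarith

theorem sqrt_mul_norm_map_le_of_abs_le {J : ℕ} (hJ : 0 < J) {C : ℝ} (hC : 0 ≤ C)
    (Φ : EuclideanSpace ℝ ι →ₗ[ℝ] F)
    (hΦ : ∀ x : EuclideanSpace ℝ ι, {i | x i ≠ 0}.ncard ≤ J → ‖Φ x‖ ≤ C * ‖x‖)
    {m : ℝ} (hm : 0 ≤ m) (x : EuclideanSpace ℝ ι) (hx : ∀ i, J * |x i| ≤ m) :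
    √J * ‖Φ x‖ ≤ C * (m + ∑ i, |x i|) := by
  suffices key : ∀ (s : Finset ι) (x : EuclideanSpace ℝ ι) (m : ℝ), 0 ≤ m →
      (∀ i ∉ s, x i = 0) → (∀ i, J * |x i| ≤ m) → √J * ‖Φ x‖ ≤ C * (m + ∑ i, |x i|) from
    key univ x m hm (by simp) hx
  intro s
  induction s using Finset.strongInduction with
  | H s ih =>
  intro x m hm hxs hx
  have hL : 0 ≤ ∑ i, |x i| := sum_nonneg fun i _ => abs_nonneg _
  by_cases hsJ : s.card ≤ J
  · rw [← indicator_eq_self hxs]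
    calc √J * ‖Φ (indicator s x)‖ ≤ C * m :=
          sqrt_mul_norm_map_indicator_le hJ hC Φ hΦ hsJ hm x fun i _ => hx i
      _ ≤ C * (m + ∑ i, |indicator s x i|) := by
          rw [indicator_eq_self hxs]; gcongr; linarith
  -- Remove the `J` largest entries; what is left has smaller support and entries
  -- bounded by the mass of the removed ones divided by `J`.
  obtain ⟨t, hts, htJ, ht⟩ :=
    exists_subset_card_eq_nsmul_le_sum (fun i => |x i|) s J (by omega)
  set y := x - indicator t x with hy_def
  have hys : ∀ i ∉ s \ t, y i = 0 := by
    intro i hi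
    rw [hy_def, sub_indicator_apply]
    split_ifs with h
    · rfl
    · exact hxs i fun his => hi (mem_sdiff.mpr ⟨his, h⟩)
  have hy : ∀ i, J * |y i| ≤ ∑ i ∈ t, |x i| := by
    intro i
    by_cases hi : i ∈ s \ t
    · simpa [hy_def, sub_indicator_apply, (mem_sdiff.mp hi).2, nsmul_eq_mul] using ht i hi
    · rw [hys i hi, abs_zero, mul_zero]
      exact sum_nonneg fun i _ => abs_nonneg _
  have hΦy := ih (s \ t) (sdiff_ssubset hts (card_pos.mp (by omega))) y _
    (sum_nonneg fun i _ => abs_nonneg _) hys hy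
  have hΦxt := sqrt_mul_norm_map_indicator_le hJ hC Φ hΦ htJ.le hm x fun i _ => hx i
  have hsplit : Φ x = Φ (indicator t x) + Φ y := by rw [← map_add, hy_def, add_sub_cancel]
  rw [← sum_abs_add_sum_abs_sub_indicator t x, hsplit]
  calc √J * ‖Φ (indicator t x) + Φ y‖ ≤ √J * ‖Φ (indicator t x)‖ + √J * ‖Φ y‖ := by
        rw [← mul_add]; gcongr; exact norm_add_le _ _
    _ ≤ C * m + C * (∑ i ∈ t, |x i| + ∑ i, |y i|) := add_le_add hΦxt hΦy
    _ = C * (m + (∑ i ∈ t, |x i| + ∑ i, |y i|)) := by ring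

theorem mul_sqrt_mul_norm_le_of_restricted_isometry {J : ℕ} (hJ : 0 < J) {c C : ℝ}
    (hc : 0 ≤ c) (hC : 0 ≤ C) (Φ : EuclideanSpace ℝ ι →ₗ[ℝ] F)
    (hΦ : ∀ x : EuclideanSpace ℝ ι, {i | x i ≠ 0}.ncard ≤ J →
      c * ‖x‖ ≤ ‖Φ x‖ ∧ ‖Φ x‖ ≤ C * ‖x‖)
    (x : EuclideanSpace ℝ ι) :
    c * (√J * ‖x‖) ≤ √J * ‖Φ x‖ + (C + c / 2) * ∑ i, |x i| := by
  obtain ⟨t, htJ, ht⟩ := exists_card_le_mul_le_sum (fun i => |x i|) J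
  set y := x - indicator t x with hy_def
  have hy : ∀ i, J * |y i| ≤ ∑ i ∈ t, |x i| := by
    intro i
    rw [hy_def, sub_indicator_apply]
    split_ifs with hi
    · simpa using sum_nonneg fun i _ => abs_nonneg (x i)
    · exact ht i hi
  have hsum_t : 0 ≤ ∑ i ∈ t, |x i| := sum_nonneg fun i _ => abs_nonneg _
  have hsqrt : 0 ≤ √(J : ℝ) := Real.sqrt_nonneg _
  have hΦy := sqrt_mul_norm_map_le_of_abs_le hJ hC Φ (fun x hx => (hΦ x hx).2) hsum_t y hy
  have hy_norm := two_mul_sqrt_mul_norm_le (Nat.cast_nonneg J) hsum_t y hy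
  have hxt_supp : ∀ i ∉ t, indicator t x i = 0 := fun i hi => by simp [hi]
  have hΦxt := (hΦ _ ((Set.ncard_support_le_card hxt_supp).trans htJ)).1
  have hx_norm : ‖x‖ ≤ ‖indicator t x‖ + ‖y‖ := by
    simpa [hy_def] using norm_add_le (indicator t x) y
  have hΦx_norm : ‖Φ (indicator t x)‖ ≤ ‖Φ x‖ + ‖Φ y‖ := by
    simpa [hy_def, map_sub] using norm_sub_le (Φ x) (Φ y)
  rw [← sum_abs_add_sum_abs_sub_indicator t x]
  calc c * (√J * ‖x‖) ≤ √J * (c * ‖indicator t x‖) + c * (√J * ‖y‖) := by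
        nlinarith [mul_le_mul_of_nonneg_left hx_norm (mul_nonneg hc hsqrt)]
    _ ≤ √J * ‖Φ x‖ + √J * ‖Φ y‖ + c * (√J * ‖y‖) := by
        nlinarith [mul_le_mul_of_nonneg_left (hΦxt.trans hΦx_norm) hsqrt]
    _ ≤ √J * ‖Φ x‖ + (C + c / 2) * (∑ i ∈ t, |x i| + ∑ i, |y i|) := by
        nlinarith [mul_le_mul_of_nonneg_left hy_norm hc]

end EuclideanSpace

/-- RIP implies RWP: if `Φ` satisfies the (no-squares) `(J,δ)`-restricted
isometry property with `0 ≤ δ < 1/3`, then `Φ` satisfies the `(3/√J, 1/3 − δ)`-robust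
width property over `B₁`. -/
theorem stmt12 {N M : ℕ} (J : ℕ) (hJ : 1 ≤ J) (δ : ℝ) (hδ0 : 0 ≤ δ) (hδ : δ < 1 / 3)
    (Φ : EuclideanSpace ℝ (Fin N) →ₗ[ℝ] EuclideanSpace ℝ (Fin M))
    (hRIP : ∀ x : EuclideanSpace ℝ (Fin N), {i | x i ≠ 0}.ncard ≤ J →
      (1 - δ) * ‖x‖ ≤ ‖Φ x‖ ∧ ‖Φ x‖ ≤ (1 + δ) * ‖x‖) :
    ∀ x : EuclideanSpace ℝ (Fin N), ‖Φ x‖ < (1 / 3 - δ) * ‖x‖ →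
      ‖x‖ ≤ (3 / Real.sqrt J) * ∑ i, |x i| := by
  intro x hx
  have hsqrt : 0 < √(J : ℝ) := Real.sqrt_pos.mpr (by exact_mod_cast hJ)
  have key := EuclideanSpace.mul_sqrt_mul_norm_le_of_restricted_isometry hJ
    (by linarith) (by linarith) Φ hRIP x
  have hL : 0 ≤ ∑ i, |x i| := sum_nonneg fun i _ => abs_nonneg _
  have hΦx : √J * ‖Φ x‖ < (1 / 3 - δ) * (√J * ‖x‖) := by
    rw [mul_left_comm]; exact mul_lt_mul_of_pos_left hx hsqrt
  rw [div_mul_eq_mul_div, le_div_iff₀ hsqrt, mul_comm]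
  nlinarith
end
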